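/- arXiv:2107.07350 — 2 statements merged into one kernel-verified Lean document; each statement's English description precedes it below -/
import Mathlib

section
/- Canonical completion from a 2-serrated domain: let Ω = (I₁×I₁) ∪ (I₂×I₂) where I₁, I₂ are sets with nonempty intersection J = I₁ ∩ I₂ covering I, and let K_Ω be a partial covariance on Ω. Define K⋆(s,t) = K_Ω(s,t) for (s,t) ∈ Ω, and K⋆(s,t) = ⟨K_Ω(s,·)|_J, K_Ω(·,t)|_J⟩_{ℋ(K_J)} otherwise. Then K⋆ is a well-defined covariance kernel on I extending K_Ω. -/
open Set MeasureTheory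
open scoped RealInnerProductSpace Classical

noncomputable section

/-- `K` is a covariance kernel on the set `S`: symmetric and positive semidefinite. -/
def IsCovOn {I : Type*} (S : Set I) (K : I → I → ℝ) : Prop :=
  (∀ s ∈ S, ∀ t ∈ S, K s t = K t s) ∧
  ∀ (n : ℕ) (t : Fin n → I), (∀ i, t i ∈ S) → ∀ c : Fin n → ℝ,
    0 ≤ ∑ i, ∑ j, c i * c j * K (t i) (t j)

/-- `Ω` is a symmetric domain containing the diagonal. -/
def IsSymmDomain {I : Type*} (Ω : Set (I × I)) : Prop :=
  (∀ s t : I, (s, t) ∈ Ω ↔ (t, s) ∈ Ω) ∧ ∀ t : I, (t, t) ∈ Ω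

/-- `K` is a partial covariance on `Ω`: each square inside `Ω` carries a covariance. -/
def IsPartialCov {I : Type*} (Ω : Set (I × I)) (K : I → I → ℝ) : Prop :=
  ∀ J : Set I, J ×ˢ J ⊆ Ω → IsCovOn J K

/-- `K` is a covariance-kernel completion of `KΩ` from the domain `Ω`. -/
def IsCompletion {I : Type*} (Ω : Set (I × I)) (KΩ K : I → I → ℝ) : Prop :=
  IsCovOn (univ : Set I) K ∧ ∀ p ∈ Ω, K p.1 p.2 = KΩ p.1 p.2

/-- `a ∈ H` represents the function `f : J → ℝ` in the (abstract realization via the feature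
map `φ` of the) RKHS of the kernel realized by `φ`: `a` lies in the closed span of the
features and the reproducing formula `f u = ⟪a, φ u⟫` holds. -/
def RepIn {J : Type*} {H : Type*} [NormedAddCommGroup H] [InnerProductSpace ℝ H]
    (φ : J → H) (a : H) (f : J → ℝ) : Prop :=
  a ∈ closure ((Submodule.span ℝ (Set.range φ) : Submodule ℝ H) : Set H) ∧
  ∀ u : J, f u = ⟪a, φ u⟫

/-! The kernel splits as the Gram kernel `⟪a s, a t⟫` plus, for `k = 1, 2`, the residual
`KΩ s t - ⟪a s, a t⟫` on `Iₖ × Iₖ` extended by zero. The residuals vanish on `J × J`, since for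
`s ∈ J` the representer `a s` is the feature `φ s`, so the sum agrees with `KΩ` on `Ω`.
Each residual is positive semidefinite on `Iₖ` by a Schur-complement argument: testing the
covariance `KΩ` on `Iₖ ⊇ J` with coefficients `(c, -d)` at points `(t, u)` gives
`Q(c) ≥ 2⟪b, v⟫ - ‖v‖²` for `b = ∑ cᵢ a(tᵢ)` and `v = ∑ dₗ φ(uₗ)`, and letting `v` tend to `b`
in the closed span of the features yields `Q(c) ≥ ‖b‖²`. -/

section Kernels

variable {I : Type*} {H : Type*} [NormedAddCommGroup H] [InnerProductSpace ℝ H]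

theorem real_inner_sum_smul_sum_smul {ι κ : Type*} (s : Finset ι) (s' : Finset κ)
    (c : ι → ℝ) (d : κ → ℝ) (x : ι → H) (y : κ → H) :
    ⟪∑ i ∈ s, c i • x i, ∑ j ∈ s', d j • y j⟫ = ∑ i ∈ s, ∑ j ∈ s', c i * d j * ⟪x i, y j⟫ := by
  simp_rw [sum_inner, inner_sum, real_inner_smul_left, real_inner_smul_right, mul_assoc]

theorem sum_sum_fin_append {n k : ℕ} (K : I → I → ℝ) (t : Fin n → I) (u : Fin k → I)
    (c : Fin n → ℝ) (d : Fin k → ℝ) :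
    ∑ i, ∑ j, Fin.append c d i * Fin.append c d j * K (Fin.append t u i) (Fin.append t u j) =
      ∑ i, ∑ j, c i * c j * K (t i) (t j) + ∑ i, ∑ l, c i * d l * K (t i) (u l) +
        ∑ l, ∑ i, d l * c i * K (u l) (t i) + ∑ l, ∑ m, d l * d m * K (u l) (u m) := by
  simp only [Fin.sum_univ_add, Fin.append_left, Fin.append_right, Finset.sum_add_distrib]
  ring

theorem isCovOn_inner (S : Set I) (a : I → H) : IsCovOn S (fun s t => ⟪a s, a t⟫) := by
  refine ⟨fun s _ t _ => real_inner_comm _ _, fun n t _ c => ?_⟩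
  rw [← real_inner_sum_smul_sum_smul]
  exact real_inner_self_nonneg

theorem IsCovOn.add {S : Set I} {K L : I → I → ℝ} (hK : IsCovOn S K) (hL : IsCovOn S L) :
    IsCovOn S (fun s t => K s t + L s t) := by
  refine ⟨fun s hs t ht => by simp only [hK.1 s hs t ht, hL.1 s hs t ht], fun n t ht c => ?_⟩
  simp only [mul_add, Finset.sum_add_distrib]
  exact add_nonneg (hK.2 n t ht c) (hL.2 n t ht c)

theorem IsCovOn.extend_by_zero {A : Set I} {K : I → I → ℝ} (hK : IsCovOn A K) :
    IsCovOn univ (fun s t => if s ∈ A ∧ t ∈ A then K s t else 0) := by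
  refine ⟨fun s _ t _ => ?_, fun n t _ c => ?_⟩
  · by_cases hst : s ∈ A ∧ t ∈ A
    · simp only [hst, and_self, if_true, hK.1 s hst.1 t hst.2]
    · simp only [hst, and_comm.not.1 hst, if_false]
  rcases A.eq_empty_or_nonempty with rfl | ⟨s₀, hs₀⟩
  · simp
  have key := hK.2 n (fun i => if t i ∈ A then t i else s₀) (fun i => by split_ifs <;> assumption)
    (fun i => if t i ∈ A then c i else 0)
  convert key using 3 with i _ j _
  by_cases hi : t i ∈ A <;> by_cases hj : t j ∈ A <;> simp [hi, hj]

variable {J : Set I} {φ : J → H}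

theorem RepIn.mem_topologicalClosure {x : H} {f : J → ℝ} (h : RepIn φ x f) :
    x ∈ (Submodule.span ℝ (range φ)).topologicalClosure := by
  rw [← SetLike.mem_coe, Submodule.topologicalClosure_coe]
  exact h.1

theorem RepIn.unique {x y : H} {f : J → ℝ} (hx : RepIn φ x f) (hy : RepIn φ y f) : x = y := by
  have horth : Submodule.span ℝ (range φ) ≤ (ℝ ∙ (x - y))ᗮ := by
    rw [Submodule.span_le]
    rintro _ ⟨u, rfl⟩
    rw [SetLike.mem_coe, Submodule.mem_orthogonal_singleton_iff_inner_right, inner_sub_left,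
      ← hx.2, ← hy.2, sub_self]
  have hxy := Submodule.topologicalClosure_minimal _ horth (Submodule.isClosed_orthogonal _)
    (sub_mem hx.mem_topologicalClosure hy.mem_topologicalClosure)
  rw [Submodule.mem_orthogonal_singleton_iff_inner_right, inner_self_eq_zero] at hxy
  exact sub_eq_zero.1 hxy

theorem inner_eq_of_repIn {K : I → I → ℝ} (hφ : ∀ u v : J, K u v = ⟪φ u, φ v⟫) {a : I → H}
    (ha : ∀ s, RepIn φ (a s) (fun u => K s u)) {s t : I} (hs : s ∈ J) (ht : t ∈ J) :
    ⟪a s, a t⟫ = K s t := by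
  have hfeature : ∀ (s : I) (hs : s ∈ J), a s = φ ⟨s, hs⟩ := fun s hs =>
    (ha s).unique ⟨subset_closure (Submodule.subset_span ⟨⟨s, hs⟩, rfl⟩), hφ ⟨s, hs⟩⟩
  rw [hfeature s hs, hfeature t ht, hφ ⟨s, hs⟩ ⟨t, ht⟩]

section Schur

variable {A : Set I} {K : I → I → ℝ} {a : I → H}

theorem IsCovOn.two_inner_sub_inner_le (hK : IsCovOn A K) (hJA : J ⊆ A)
    (hφ : ∀ u v : J, K u v = ⟪φ u, φ v⟫) (ha : ∀ s ∈ A, RepIn φ (a s) (fun u => K s u))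
    {n : ℕ} (t : Fin n → I) (ht : ∀ i, t i ∈ A) (c : Fin n → ℝ) {v : H}
    (hv : v ∈ Submodule.span ℝ (range φ)) :
    2 * ⟪∑ i, c i • a (t i), v⟫ - ⟪v, v⟫ ≤ ∑ i, ∑ j, c i * c j * K (t i) (t j) := by
  obtain ⟨k, d, w, rfl⟩ := Submodule.mem_span_set'.1 hv
  choose u hu using fun l => (w l).2
  have hw : ∑ l, d l • (w l : H) = ∑ l, d l • φ (u l) := by simp only [hu]
  have hcross : ∀ i l, K (t i) (u l) = ⟪a (t i), φ (u l)⟫ := fun i l => (ha _ (ht i)).2 (u l)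
  have hcross' : ∀ l i, K (u l) (t i) = ⟪a (t i), φ (u l)⟫ := fun l i => by
    rw [hK.1 _ (hJA (u l).2) _ (ht i), hcross]
  have hpos := hK.2 (n + k) (Fin.append t fun l => u l)
    (Fin.addCases (fun i => by simpa using ht i) (fun l => by simpa using hJA (u l).2))
    (Fin.append c (-d))
  rw [sum_sum_fin_append] at hpos
  simp only [hcross, hcross', hφ, Pi.neg_apply, neg_mul, mul_neg, neg_neg, Finset.sum_neg_distrib]
    at hpos
  rw [hw, real_inner_sum_smul_sum_smul, real_inner_sum_smul_sum_smul]
  rw [Finset.sum_comm (f := fun l i => d l * c i * _)] at hpos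
  simp only [mul_comm (d _) (c _)] at hpos
  linarith

theorem IsCovOn.sub_inner_of_repIn (hK : IsCovOn A K) (hJA : J ⊆ A)
    (hφ : ∀ u v : J, K u v = ⟪φ u, φ v⟫) (ha : ∀ s ∈ A, RepIn φ (a s) (fun u => K s u)) :
    IsCovOn A (fun s t => K s t - ⟪a s, a t⟫) := by
  refine ⟨fun s hs t ht => by simp only [hK.1 s hs t ht, real_inner_comm], fun n t ht c => ?_⟩
  set b := ∑ i, c i • a (t i)
  have hb : b ∈ (Submodule.span ℝ (range φ)).topologicalClosure :=
    Submodule.sum_mem _ fun i _ => Submodule.smul_mem _ _ (ha _ (ht i)).mem_topologicalClosure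
  have hbb : 2 * ⟪b, b⟫ - ⟪b, b⟫ ≤ ∑ i, ∑ j, c i * c j * K (t i) (t j) :=
    closure_minimal (t := {v | 2 * ⟪b, v⟫ - ⟪v, v⟫ ≤ ∑ i, ∑ j, c i * c j * K (t i) (t j)})
      (fun v hv => hK.two_inner_sub_inner_le hJA hφ ha t ht c hv)
      (isClosed_le (by fun_prop) continuous_const)
      (by rwa [← Submodule.topologicalClosure_coe])
  simp only [mul_sub, Finset.sum_sub_distrib, ← real_inner_sum_smul_sum_smul]
  linarith

end Schur

end Kernels

theorem ite_mem_union_prod_eq_add {I : Type*} {I₁ I₂ : Set I} {K G : I → I → ℝ}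
    (hJ : ∀ s ∈ I₁ ∩ I₂, ∀ t ∈ I₁ ∩ I₂, G s t = K s t) (s t : I) :
    (if (s, t) ∈ (I₁ ×ˢ I₁) ∪ (I₂ ×ˢ I₂) then K s t else G s t) =
      G s t + (if s ∈ I₁ ∧ t ∈ I₁ then K s t - G s t else 0) +
        (if s ∈ I₂ ∧ t ∈ I₂ then K s t - G s t else 0) := by
  simp only [mem_union, mem_prod]
  by_cases h₁ : s ∈ I₁ ∧ t ∈ I₁ <;> by_cases h₂ : s ∈ I₂ ∧ t ∈ I₂
  · rw [if_pos (Or.inl h₁), if_pos h₁, if_pos h₂, hJ s ⟨h₁.1, h₂.1⟩ t ⟨h₁.2, h₂.2⟩]; ring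
  · rw [if_pos (Or.inl h₁), if_pos h₁, if_neg h₂]; ring
  · rw [if_pos (Or.inr h₂), if_neg h₁, if_pos h₂]; ring
  · rw [if_neg (not_or.2 ⟨h₁, h₂⟩), if_neg h₁, if_neg h₂]; ring

theorem canonical_completion_two_serrated_general {I : Type*} (I₁ I₂ : Set I)
    (KΩ : I → I → ℝ)
    (hpc : IsPartialCov ((I₁ ×ˢ I₁) ∪ (I₂ ×ˢ I₂)) KΩ)
    (H : Type*) [NormedAddCommGroup H] [InnerProductSpace ℝ H]
    (φ : ↥(I₁ ∩ I₂) → H)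
    (hφ : ∀ u v : ↥(I₁ ∩ I₂), KΩ u.1 v.1 = ⟪φ u, φ v⟫)
    (a : I → H)
    (ha : ∀ s : I, RepIn φ (a s) (fun u : ↥(I₁ ∩ I₂) => KΩ s u.1)) :
    IsCompletion ((I₁ ×ˢ I₁) ∪ (I₂ ×ˢ I₂)) KΩ
      (fun s t => if (s, t) ∈ (I₁ ×ˢ I₁) ∪ (I₂ ×ˢ I₂) then KΩ s t else ⟪a s, a t⟫) := by
  have hres : ∀ {A : Set I}, A ×ˢ A ⊆ (I₁ ×ˢ I₁) ∪ (I₂ ×ˢ I₂) → I₁ ∩ I₂ ⊆ A →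
      IsCovOn univ (fun s t => if s ∈ A ∧ t ∈ A then KΩ s t - ⟪a s, a t⟫ else 0) :=
    fun hA hJA => ((hpc _ hA).sub_inner_of_repIn hJA hφ fun s _ => ha s).extend_by_zero
  refine ⟨?_, fun p hp => if_pos hp⟩
  rw [funext₂ (ite_mem_union_prod_eq_add fun s hs t ht => inner_eq_of_repIn hφ ha hs ht)]
  exact ((isCovOn_inner univ a).add (hres subset_union_left inter_subset_left)).add
    (hres subset_union_right inter_subset_right)

/-- Canonical completion from a 2-serrated domain: given a partial covariance `KΩ` on
`Ω = (I₁×I₁) ∪ (I₂×I₂)` with `I₁ ∪ I₂ = I` and `J = I₁ ∩ I₂ ≠ ∅`, the kernel which equals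
`KΩ` on `Ω` and `⟨KΩ(s,·)|_J, KΩ(·,t)|_J⟩_{ℋ(K_J)}` off `Ω` is a well-defined covariance
completing `KΩ`.  The RKHS inner product is expressed through an arbitrary feature-map
realization `(H, φ)` of `K_J` and representing vectors `a s` of the sections `KΩ(s,·)|_J`. -/
theorem canonical_completion_two_serrated {I : Type*} (I₁ I₂ : Set I)
    (hcover : I₁ ∪ I₂ = univ) (hne : (I₁ ∩ I₂).Nonempty)
    (KΩ : I → I → ℝ)
    (hpc : IsPartialCov ((I₁ ×ˢ I₁) ∪ (I₂ ×ˢ I₂)) KΩ)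
    (H : Type*) [NormedAddCommGroup H] [InnerProductSpace ℝ H]
    (φ : ↥(I₁ ∩ I₂) → H)
    (hφ : ∀ u v : ↥(I₁ ∩ I₂), KΩ u.1 v.1 = ⟪φ u, φ v⟫)
    (a : I → H)
    (ha : ∀ s : I, RepIn φ (a s) (fun u : ↥(I₁ ∩ I₂) => KΩ s u.1)) :
    IsCompletion ((I₁ ×ˢ I₁) ∪ (I₂ ×ˢ I₂)) KΩ
      (fun s t => if (s, t) ∈ (I₁ ×ˢ I₁) ∪ (I₂ ×ˢ I₂) then KΩ s t else ⟪a s, a t⟫) :=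
  canonical_completion_two_serrated_general I₁ I₂ KΩ hpc H φ hφ a ha
end
end

section
/- Range of admissible off-domain values: let K_Ω be a partial covariance on the 2-serrated domain Ω = (I₁×I₁)∪(I₂×I₂) with J = I₁∩I₂, and fix s ∈ I₁∖J, t ∈ I₂∖J, α ∈ ℝ. Then there exists a covariance completion K of K_Ω with K(s,t) = α + ⟨K_Ω(s,·)|_J, K_Ω(·,t)|_J⟩_{ℋ(K_J)} if and only if |α| ≤ √( (K_{I₁}/K_J)(s,s) · (K_{I₂}/K_J)(t,t) ). -/
open Set MeasureTheory
open scoped RealInnerProductSpace Classical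

noncomputable section

/-! The representers `a x` carry the part of `KΩ` explained by `J`: the Schur complement
`D x y = KΩ x y - ⟪a x, a y⟫` is a covariance on each `Iᵢ` (approximate `∑ cᵢ • a xᵢ` by finite
combinations of features and use positivity of `KΩ` on the enlarged family), and it vanishes as
soon as one argument lies in `J`. The same argument makes `K - ⟪a, a⟫` positive semidefinite on
all of `I` for every completion `K`, and its `2 × 2` minor at `(s, t)` gives
`α² ≤ D s s * D t t`. Conversely, choose `r` with `r * D s s * D t t = α` and glue `D` on `I₁` and
on `I₂ ∖ I₁` with the rank-one cross term `r * D s x * D t y`: its quadratic form is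
`Q₁ + Q₂ + 2 r u v`, which is nonnegative by the Cauchy–Schwarz bounds `u² ≤ D s s * Q₁` and
`v² ≤ D t t * Q₂`. Adding back `⟪a x, a y⟫` gives the required completion. -/

section Representer

variable {J H : Type*} [NormedAddCommGroup H] [InnerProductSpace ℝ H] {φ : J → H}

theorem eq_zero_of_mem_closure_span_of_inner_eq_zero {v : H}
    (hv : v ∈ closure ((Submodule.span ℝ (range φ) : Submodule ℝ H) : Set H))
    (h : ∀ u, ⟪v, φ u⟫ = 0) : v = 0 := by
  have hspan : Submodule.span ℝ (range φ) ≤ (ℝ ∙ v)ᗮ := by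
    rw [Submodule.span_le]
    rintro _ ⟨u, rfl⟩
    rw [SetLike.mem_coe, Submodule.mem_orthogonal_singleton_iff_inner_right]
    exact h u
  have hvv : v ∈ (ℝ ∙ v)ᗮ :=
    Submodule.topologicalClosure_minimal _ hspan (Submodule.isClosed_orthogonal _) hv
  exact inner_self_eq_zero.1 (Submodule.mem_orthogonal_singleton_iff_inner_right.1 hvv)

theorem RepIn.unique_s9 {a a' : H} {f : J → ℝ} (h : RepIn φ a f) (h' : RepIn φ a' f) :
    a = a' := by
  refine sub_eq_zero.1 (eq_zero_of_mem_closure_span_of_inner_eq_zero (φ := φ) ?_ fun u => ?_)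
  · exact (Submodule.span ℝ (range φ)).topologicalClosure.sub_mem h.1 h'.1
  · rw [inner_sub_left, ← h.2, ← h'.2, sub_self]

theorem RepIn.eq_of_gram {I : Type*} {K : I → I → ℝ} {ι : J → I}
    (hφ : ∀ u v, K (ι u) (ι v) = ⟪φ u, φ v⟫) {a : H} {u : J}
    (h : RepIn φ a (fun v => K (ι u) (ι v))) : a = φ u :=
  h.unique_s9 ⟨subset_closure (Submodule.subset_span (mem_range_self u)), hφ u⟩

end Representer

section KernelForm

variable {I : Type*}

def kernelForm (K : I → I → ℝ) {m n : ℕ} (x : Fin m → I) (c : Fin m → ℝ) (y : Fin n → I)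
    (e : Fin n → ℝ) : ℝ :=
  ∑ i, ∑ j, c i * e j * K (x i) (y j)

variable {K : I → I → ℝ} {m m' n n' : ℕ} {x : Fin m → I} {c : Fin m → ℝ} {y : Fin n → I}
  {e : Fin n → ℝ}

theorem kernelForm_append_left (x' : Fin m' → I) (c' : Fin m' → ℝ) :
    kernelForm K (Fin.append x x') (Fin.append c c') y e =
      kernelForm K x c y e + kernelForm K x' c' y e := by
  simp [kernelForm, Fin.sum_univ_add]

theorem kernelForm_append_right (y' : Fin n' → I) (e' : Fin n' → ℝ) :
    kernelForm K x c (Fin.append y y') (Fin.append e e') =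
      kernelForm K x c y e + kernelForm K x c y' e' := by
  simp [kernelForm, Fin.sum_univ_add, Finset.sum_add_distrib]

theorem kernelForm_comm (h : ∀ i j, K (x i) (y j) = K (y j) (x i)) :
    kernelForm K y e x c = kernelForm K x c y e := by
  rw [kernelForm, Finset.sum_comm]
  exact Finset.sum_congr rfl fun i _ => Finset.sum_congr rfl fun j _ => by rw [h]; ring

theorem kernelForm_congr {K' : I → I → ℝ} (h : ∀ i j, K (x i) (y j) = K' (x i) (y j)) :
    kernelForm K x c y e = kernelForm K' x c y e := by
  simp only [kernelForm, h]

theorem kernelForm_inner {H : Type*} [NormedAddCommGroup H] [InnerProductSpace ℝ H]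
    (b : I → H) :
    kernelForm (fun x y => ⟪b x, b y⟫) x c y e = ⟪∑ i, c i • b (x i), ∑ j, e j • b (y j)⟫ := by
  rw [kernelForm, sum_inner]
  refine Finset.sum_congr rfl fun i _ => ?_
  rw [real_inner_smul_left, inner_sum, Finset.mul_sum]
  exact Finset.sum_congr rfl fun j _ => by rw [real_inner_smul_right]; ring

end KernelForm

namespace IsCovOn

variable {I : Type*} {S : Set I} {K : I → I → ℝ}

theorem kernelForm_nonneg (hK : IsCovOn S K) {n : ℕ} {x : Fin n → I} (hx : ∀ i, x i ∈ S)
    (c : Fin n → ℝ) : 0 ≤ kernelForm K x c x c :=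
  hK.2 n x hx c

theorem mono {T : Set I} (hK : IsCovOn S K) (hTS : T ⊆ S) : IsCovOn T K :=
  ⟨fun s hs t ht => hK.1 s (hTS hs) t (hTS ht), fun n x hx => hK.2 n x fun i => hTS (hx i)⟩

theorem add_s9 {K' : I → I → ℝ} (hK : IsCovOn S K) (hK' : IsCovOn S K') :
    IsCovOn S (fun x y => K x y + K' x y) := by
  refine ⟨fun s hs t ht => ?_, fun n x hx c => ?_⟩
  · simp only [hK.1 s hs t ht, hK'.1 s hs t ht]
  · have h := add_nonneg (hK.2 n x hx c) (hK'.2 n x hx c)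
    simpa only [mul_add, Finset.sum_add_distrib] using h

theorem diag_nonneg (hK : IsCovOn S K) {s : I} (hs : s ∈ S) : 0 ≤ K s s := by
  simpa using hK.2 1 (fun _ => s) (fun _ => hs) (fun _ => 1)

theorem sq_sum_le (hK : IsCovOn S K) {n : ℕ} {x : Fin n → I} (hx : ∀ i, x i ∈ S)
    (c : Fin n → ℝ) {s : I} (hs : s ∈ S) :
    (∑ i, c i * K s (x i)) ^ 2 ≤ K s s * kernelForm K x c x c := by
  set u := ∑ i, c i * K s (x i)
  have hquad : ∀ τ : ℝ, 0 ≤ K s s * (τ * τ) + 2 * u * τ + kernelForm K x c x c := by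
    intro τ
    have hmem : ∀ i, Fin.append (fun _ : Fin 1 => s) x i ∈ S := fun i =>
      Fin.addCases (fun _ => by simpa using hs) (fun j => by simpa using hx j) i
    have h := hK.kernelForm_nonneg hmem (Fin.append (fun _ => τ) c)
    have hsx : kernelForm K (fun _ : Fin 1 => s) (fun _ => τ) x c = τ * u := by
      simp [kernelForm, u, Finset.mul_sum, mul_assoc]
    rw [kernelForm_append_left, kernelForm_append_right, kernelForm_append_right,
      kernelForm_comm (x := fun _ : Fin 1 => s) fun _ j => hK.1 _ hs _ (hx j), hsx] at h
    have hss : kernelForm K (fun _ : Fin 1 => s) (fun _ => τ) (fun _ : Fin 1 => s) (fun _ => τ) =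
        K s s * (τ * τ) := by
      simp [kernelForm, mul_comm]
    linarith
  have h := discrim_le_zero hquad
  rw [discrim] at h
  linarith

theorem sq_le_mul (hK : IsCovOn S K) {s t : I} (hs : s ∈ S) (ht : t ∈ S) :
    K s t ^ 2 ≤ K s s * K t t := by
  simpa [kernelForm] using hK.sq_sum_le (x := fun _ : Fin 1 => t) (fun _ => ht) (fun _ => 1) hs

end IsCovOn

theorem isCovOn_inner_s9 {I H : Type*} [NormedAddCommGroup H] [InnerProductSpace ℝ H] (S : Set I)
    (b : I → H) : IsCovOn S (fun x y => ⟪b x, b y⟫) :=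
  ⟨fun _ _ _ _ => real_inner_comm _ _, fun n x _ c => by
    rw [← kernelForm, kernelForm_inner]
    exact real_inner_self_nonneg⟩

namespace IsCovOn

variable {I J H : Type*} [NormedAddCommGroup H] [InnerProductSpace ℝ H] {S : Set I}
  {K : I → I → ℝ} {ι : J → I} {φ : J → H} {b : I → H}

theorem norm_sum_smul_sq_le (hK : IsCovOn S K) (hι : ∀ u, ι u ∈ S)
    (hφ : ∀ u v, K (ι u) (ι v) = ⟪φ u, φ v⟫)
    (hb : ∀ x ∈ S, RepIn φ (b x) (fun u => K x (ι u))) {n : ℕ} {x : Fin n → I}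
    (hx : ∀ i, x i ∈ S) (c : Fin n → ℝ) :
    ‖∑ i, c i • b (x i)‖ ^ 2 ≤ kernelForm K x c x c := by
  have hbι : ∀ u, b (ι u) = φ u := fun u => (hb (ι u) (hι u)).eq_of_gram hφ
  have hKb : ∀ p ∈ S, ∀ u, K p (ι u) = ⟪b p, b (ι u)⟫ := fun p hp u => by
    rw [hbι]; exact (hb p hp).2 u
  set w := ∑ i, c i • b (x i)
  set V := Submodule.span ℝ (range φ)
  have hspan : ∀ z ∈ V, ‖w‖ ^ 2 - ‖w + z‖ ^ 2 ≤ kernelForm K x c x c := by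
    intro z hz
    obtain ⟨m, e, g, rfl⟩ := Submodule.mem_span_set'.1 hz
    choose u hu using fun k => (g k).2
    set y := fun k => ι (u k)
    have hz : ∑ k, e k • (g k : H) = ∑ k, e k • b (y k) := by simp [y, hu, hbι]
    have hxy : kernelForm K x c y e = ⟪w, ∑ k, e k • b (y k)⟫ := by
      rw [kernelForm_congr (K' := fun p q => ⟪b p, b q⟫) fun i k => hKb _ (hx i) (u k),
        kernelForm_inner]
    have hyx : kernelForm K y e x c = ⟪w, ∑ k, e k • b (y k)⟫ := by
      rw [kernelForm_comm fun i k => hK.1 _ (hx i) _ (hι (u k)), hxy]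
    have hyy : kernelForm K y e y e = ‖∑ k, e k • b (y k)‖ ^ 2 := by
      rw [kernelForm_congr (K' := fun p q => ⟪b p, b q⟫) fun k l => hKb _ (hι (u k)) (u l),
        kernelForm_inner, real_inner_self_eq_norm_sq]
    have h := hK.kernelForm_nonneg (x := Fin.append x y)
      (fun i => Fin.addCases (fun j => by simpa using hx j) (fun k => by simpa using hι (u k)) i)
      (Fin.append c e)
    rw [kernelForm_append_left, kernelForm_append_right, kernelForm_append_right, hxy, hyx,
      hyy] at h
    rw [hz, norm_add_sq_real]
    linarith
  have hw : -w ∈ closure (V : Set H) :=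
    V.topologicalClosure.neg_mem
      (V.topologicalClosure.sum_mem fun i _ => V.topologicalClosure.smul_mem _ (hb _ (hx i)).1)
  have hclosed : IsClosed {z | ‖w‖ ^ 2 - ‖w + z‖ ^ 2 ≤ kernelForm K x c x c} :=
    isClosed_le (by fun_prop) continuous_const
  have h : ‖w‖ ^ 2 - ‖w + -w‖ ^ 2 ≤ kernelForm K x c x c := closure_minimal hspan hclosed hw
  simpa using h

theorem sub_inner (hK : IsCovOn S K) (hι : ∀ u, ι u ∈ S)
    (hφ : ∀ u v, K (ι u) (ι v) = ⟪φ u, φ v⟫)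
    (hb : ∀ x ∈ S, RepIn φ (b x) (fun u => K x (ι u))) :
    IsCovOn S (fun x y => K x y - ⟪b x, b y⟫) := by
  refine ⟨fun x hx y hy => by simp only [hK.1 x hx y hy, real_inner_comm], fun n x hx c => ?_⟩
  have h := hK.norm_sum_smul_sq_le hι hφ hb hx c
  rw [← real_inner_self_eq_norm_sq, ← kernelForm_inner] at h
  simp only [kernelForm, mul_sub, Finset.sum_sub_distrib] at h ⊢
  linarith

end IsCovOn

theorem add_add_two_mul_nonneg_of_sq_le {Q₁ Q₂ d₁ d₂ u v r : ℝ} (hQ₁ : 0 ≤ Q₁) (hQ₂ : 0 ≤ Q₂)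
    (hu : u ^ 2 ≤ d₁ * Q₁) (hv : v ^ 2 ≤ d₂ * Q₂) (hr : r ^ 2 * (d₁ * d₂) ≤ 1) :
    0 ≤ Q₁ + Q₂ + 2 * r * u * v := by
  have h : (2 * r * u * v) ^ 2 ≤ (Q₁ + Q₂) ^ 2 := calc
    (2 * r * u * v) ^ 2 = 4 * r ^ 2 * (u ^ 2 * v ^ 2) := by ring
    _ ≤ 4 * r ^ 2 * ((d₁ * Q₁) * (d₂ * Q₂)) := by
      have := mul_le_mul hu hv (sq_nonneg v) ((sq_nonneg u).trans hu)
      gcongr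
    _ = 4 * (r ^ 2 * (d₁ * d₂)) * (Q₁ * Q₂) := by ring
    _ ≤ 4 * 1 * (Q₁ * Q₂) := by gcongr
    _ ≤ (Q₁ + Q₂) ^ 2 := by nlinarith [sq_nonneg (Q₁ - Q₂)]
  linarith [(abs_le_of_sq_le_sq' h (by positivity)).1]

theorem exists_sq_mul_le_one_and_mul_eq {α P : ℝ} (h : α ^ 2 ≤ P) :
    ∃ r : ℝ, r ^ 2 * P ≤ 1 ∧ r * P = α := by
  rcases ((sq_nonneg α).trans h).eq_or_lt with hP | hP
  · exact ⟨0, by simp, by nlinarith⟩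
  · refine ⟨α / P, ?_, div_mul_cancel₀ α hP.ne'⟩
    rw [div_pow, div_mul_eq_mul_div, div_le_one (by positivity), sq P]
    exact mul_le_mul_of_nonneg_right h hP.le

section Glue

variable {I : Type*}

def glueKernel (D : I → I → ℝ) (A : Set I) (s t : I) (r : ℝ) (x y : I) : ℝ :=
  if x ∈ A then (if y ∈ A then D x y else r * D s x * D t y)
  else if y ∈ A then r * D s y * D t x else D x y

variable {D : I → I → ℝ} {A : Set I} {s t : I} {r : ℝ}

theorem isCovOn_glueKernel (hA : IsCovOn A D) (hAc : IsCovOn Aᶜ D) (hs : s ∈ A) (ht : t ∉ A)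
    (hr : r ^ 2 * (D s s * D t t) ≤ 1) : IsCovOn univ (glueKernel D A s t r) := by
  refine ⟨fun x _ y _ => ?_, fun n p _ c => ?_⟩
  · unfold glueKernel
    split_ifs with hx hy hy
    exacts [hA.1 x hx y hy, rfl, rfl, hAc.1 x hx y hy]
  -- Split the points into those in `A` and those outside, parking the others at `s`, resp. `t`,
  -- with coefficient zero.
  set c₁ : Fin n → ℝ := fun i => if p i ∈ A then c i else 0
  set c₂ : Fin n → ℝ := fun i => if p i ∈ A then 0 else c i
  set x₁ : Fin n → I := fun i => if p i ∈ A then p i else s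
  set x₂ : Fin n → I := fun i => if p i ∈ A then t else p i
  have hx₁ : ∀ i, x₁ i ∈ A := fun i => by by_cases h : p i ∈ A <;> simp [x₁, h, hs]
  have hx₂ : ∀ i, x₂ i ∈ Aᶜ := fun i => by by_cases h : p i ∈ A <;> simp [x₂, h, ht]
  set u := ∑ i, c₁ i * D s (x₁ i)
  set v := ∑ j, c₂ j * D t (x₂ j)
  have hpoint : ∀ i j, c i * c j * glueKernel D A s t r (p i) (p j) =
      c₁ i * c₁ j * D (x₁ i) (x₁ j) + c₂ i * c₂ j * D (x₂ i) (x₂ j) +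
        r * ((c₁ i * D s (x₁ i)) * (c₂ j * D t (x₂ j))) +
        r * ((c₁ j * D s (x₁ j)) * (c₂ i * D t (x₂ i))) := fun i j => by
    by_cases hi : p i ∈ A <;> by_cases hj : p j ∈ A <;>
      simp only [glueKernel, c₁, c₂, x₁, x₂, hi, hj, if_true, if_false] <;> ring
  have hsplit : ∑ i, ∑ j, c i * c j * glueKernel D A s t r (p i) (p j) =
      kernelForm D x₁ c₁ x₁ c₁ + kernelForm D x₂ c₂ x₂ c₂ + 2 * r * u * v := by
    have hcross : ∑ i, ∑ j, r * ((c₁ i * D s (x₁ i)) * (c₂ j * D t (x₂ j))) = r * (u * v) := by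
      simp only [u, v]
      rw [Finset.sum_mul_sum, Finset.mul_sum]
      simp only [Finset.mul_sum]
    simp only [hpoint, Finset.sum_add_distrib]
    rw [Finset.sum_comm (f := fun i j => r * (c₁ j * D s (x₁ j) * (c₂ i * D t (x₂ i)))), hcross]
    simp only [kernelForm]
    ring
  rw [hsplit]
  exact add_add_two_mul_nonneg_of_sq_le (hA.kernelForm_nonneg hx₁ c₁)
    (hAc.kernelForm_nonneg hx₂ c₂) (hA.sq_sum_le hx₁ c₁ hs) (hAc.sq_sum_le hx₂ c₂ ht) hr

end Glue

theorem glueKernel_eq_of_mem_union {I : Type*} {D : I → I → ℝ} {A B : Set I} {s t : I} {r : ℝ}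
    (hB : IsCovOn B D) (hD : ∀ x, ∀ u ∈ A ∩ B, D x u = 0) {x y : I}
    (hxy : (x, y) ∈ A ×ˢ A ∪ B ×ˢ B) : glueKernel D A s t r x y = D x y := by
  rcases hxy with ⟨hx, hy⟩ | ⟨hx, hy⟩
  · simp [glueKernel, hx, hy]
  by_cases hxA : x ∈ A <;> by_cases hyA : y ∈ A
  · simp [glueKernel, hxA, hyA]
  · simp [glueKernel, hxA, hyA, hD s x ⟨hxA, hx⟩, hB.1 x hx y hy, hD y x ⟨hxA, hx⟩]
  · simp [glueKernel, hxA, hyA, hD s y ⟨hyA, hy⟩, hD x y ⟨hyA, hy⟩]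
  · simp [glueKernel, hxA, hyA]

theorem IsCompletion.apply_of_mem_inter {I : Type*} {I₁ I₂ : Set I} (hcover : I₁ ∪ I₂ = univ)
    {KΩ K : I → I → ℝ} (hK : IsCompletion ((I₁ ×ˢ I₁) ∪ (I₂ ×ˢ I₂)) KΩ K) (x : I) {u : I}
    (hu : u ∈ I₁ ∩ I₂) : K x u = KΩ x u := by
  refine hK.2 (x, u) ?_
  rcases (hcover ▸ mem_univ x : x ∈ I₁ ∪ I₂) with hx | hx
  exacts [Or.inl ⟨hx, hu.1⟩, Or.inr ⟨hx, hu.2⟩]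

theorem off_domain_value_range_general {I : Type*} (I₁ I₂ : Set I)
    (hcover : I₁ ∪ I₂ = univ)
    (KΩ : I → I → ℝ)
    (hpc : IsPartialCov ((I₁ ×ˢ I₁) ∪ (I₂ ×ˢ I₂)) KΩ)
    (H : Type*) [NormedAddCommGroup H] [InnerProductSpace ℝ H]
    (φ : ↥(I₁ ∩ I₂) → H)
    (hφ : ∀ u v : ↥(I₁ ∩ I₂), KΩ u.1 v.1 = ⟪φ u, φ v⟫)
    (a : I → H)
    (ha : ∀ s : I, RepIn φ (a s) (fun u : ↥(I₁ ∩ I₂) => KΩ s u.1))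
    (s t : I) (hs : s ∈ I₁ \ (I₁ ∩ I₂)) (ht : t ∈ I₂ \ (I₁ ∩ I₂)) (α : ℝ) :
    (∃ K : I → I → ℝ, IsCompletion ((I₁ ×ˢ I₁) ∪ (I₂ ×ˢ I₂)) KΩ K ∧
      K s t = α + ⟪a s, a t⟫) ↔
    |α| ≤ Real.sqrt ((KΩ s s - ⟪a s, a s⟫) * (KΩ t t - ⟪a t, a t⟫)) := by
  have ht₁ : t ∉ I₁ := fun h => ht.2 ⟨h, ht.1⟩
  set D : I → I → ℝ := fun x y => KΩ x y - ⟪a x, a y⟫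
  have hD₁ : IsCovOn I₁ D :=
    (hpc I₁ fun _ => Or.inl).sub_inner (ι := Subtype.val) (fun u => u.2.1) hφ fun x _ => ha x
  have hD₂ : IsCovOn I₂ D :=
    (hpc I₂ fun _ => Or.inr).sub_inner (ι := Subtype.val) (fun u => u.2.2) hφ fun x _ => ha x
  constructor
  · rintro ⟨K, hK, hKst⟩
    have hKJ : ∀ x (u : ↥(I₁ ∩ I₂)), K x u = KΩ x u := fun x u =>
      hK.apply_of_mem_inter hcover x u.2
    have hDK : IsCovOn univ (fun x y => K x y - ⟪a x, a y⟫) :=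
      hK.1.sub_inner (ι := Subtype.val) (fun _ => mem_univ _)
        (fun u v => (hKJ u v).trans (hφ u v)) fun x _ => by simpa only [hKJ x] using ha x
    have h := hDK.sq_le_mul (mem_univ s) (mem_univ t)
    rw [hKst, hK.2 (s, s) (Or.inl ⟨hs.1, hs.1⟩), hK.2 (t, t) (Or.inr ⟨ht.1, ht.1⟩)] at h
    exact Real.abs_le_sqrt (by simpa using h)
  · intro hα
    have hP : 0 ≤ D s s * D t t := mul_nonneg (hD₁.diag_nonneg hs.1) (hD₂.diag_nonneg ht.1)
    obtain ⟨r, hr, hrα⟩ := exists_sq_mul_le_one_and_mul_eq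
      (sq_abs α ▸ (Real.le_sqrt (abs_nonneg α) hP).1 hα)
    have hDJ : ∀ x, ∀ u ∈ I₁ ∩ I₂, D x u = 0 := fun x u hu => by
      have hau : a u = φ ⟨u, hu⟩ := (ha u).eq_of_gram (ι := Subtype.val) hφ
      simp [D, hau, (ha x).2 ⟨u, hu⟩]
    have hI₂ : I₁ᶜ ⊆ I₂ := fun x hx => (hcover ▸ mem_univ x : x ∈ I₁ ∪ I₂).resolve_left hx
    refine ⟨fun x y => ⟪a x, a y⟫ + glueKernel D I₁ s t r x y,
      ⟨(isCovOn_inner_s9 univ a).add_s9 (isCovOn_glueKernel hD₁ (hD₂.mono hI₂) hs.1 ht₁ hr),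
        fun p hp => ?_⟩, ?_⟩
    · simp only [glueKernel_eq_of_mem_union hD₂ hDJ hp, D]
      ring
    · simp only [glueKernel, hs.1, ht₁, if_true, if_false, ← hrα, D]
      ring

/-- Range of admissible off-domain values: for `s ∈ I₁∖J`, `t ∈ I₂∖J` and `α ∈ ℝ`, there is
a completion `K` of `KΩ` with `K(s,t) = α + ⟨KΩ(s,·)|_J, KΩ(·,t)|_J⟩_{ℋ(K_J)}` iff
`|α| ≤ √((K_{I₁}/K_J)(s,s) · (K_{I₂}/K_J)(t,t))`. -/
theorem off_domain_value_range {I : Type*} (I₁ I₂ : Set I)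
    (hcover : I₁ ∪ I₂ = univ) (hne : (I₁ ∩ I₂).Nonempty)
    (KΩ : I → I → ℝ)
    (hpc : IsPartialCov ((I₁ ×ˢ I₁) ∪ (I₂ ×ˢ I₂)) KΩ)
    (H : Type*) [NormedAddCommGroup H] [InnerProductSpace ℝ H]
    (φ : ↥(I₁ ∩ I₂) → H)
    (hφ : ∀ u v : ↥(I₁ ∩ I₂), KΩ u.1 v.1 = ⟪φ u, φ v⟫)
    (a : I → H)
    (ha : ∀ s : I, RepIn φ (a s) (fun u : ↥(I₁ ∩ I₂) => KΩ s u.1))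
    (s t : I) (hs : s ∈ I₁ \ (I₁ ∩ I₂)) (ht : t ∈ I₂ \ (I₁ ∩ I₂)) (α : ℝ) :
    (∃ K : I → I → ℝ, IsCompletion ((I₁ ×ˢ I₁) ∪ (I₂ ×ˢ I₂)) KΩ K ∧
      K s t = α + ⟪a s, a t⟫) ↔
    |α| ≤ Real.sqrt ((KΩ s s - ⟪a s, a s⟫) * (KΩ t t - ⟪a t, a t⟫)) :=
  off_domain_value_range_general I₁ I₂ hcover KΩ hpc H φ hφ a ha s t hs ht α
end
end
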